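/- arXiv:1907.09696 — 4 statements merged into one kernel-verified Lean document; each statement's English description precedes it below -/
import Mathlib

section
/- Given m data points (x₁,y₁),…,(x_m,y_m) in ℝ^{d}×ℝ and a vector w with w·x₁ < w·x₂ < ⋯ < w·x_m, define recursively N(x;0) = y₁ and N(x;j) = N(x;j−1) + c_j·φ(w·(x − x_j)) with c_j = (y_{j+1} − N(x_{j+1};j−1))/(w·(x_{j+1} − x_j)) for j = 1,…,m−1, where φ(t) = max(t,0). Then the shallow ReLU network N(·;m−1) of width m−1 interpolates all data: N(x_j;m−1) = y_j for every j = 1,…,m. -/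
/-!
The unit `φ(⟪w, v - x k⟫)` added at step `k + 1` vanishes at `x 0, …, x k`, which lie on the
non-positive side of the hyperplane `⟪w, v - x k⟫ = 0`, so it keeps the values already
interpolated; at `x (k + 1)` it is positive, and `c (k + 1)` is exactly the coefficient that
corrects the value there to `y (k + 1)`.
-/

open scoped RealInnerProductSpace

section

variable {E : Type*} [NormedAddCommGroup E] [InnerProductSpace ℝ E]

lemma max_inner_sub_zero_eq_zero {w a b : E} (h : ⟪w, a⟫ ≤ ⟪w, b⟫) : max ⟪w, a - b⟫ 0 = 0 := by
  rw [inner_sub_right]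
  exact max_eq_right (sub_nonpos.2 h)

lemma add_div_mul_max_self_zero {a r t : ℝ} (ha : 0 < a) : r + (t - r) / a * max a 0 = t := by
  rw [max_eq_left ha.le, div_mul_cancel₀ _ ha.ne']
  ring

lemma interpolates_add_relu {f g : E → ℝ} {x : ℕ → E} {y : ℕ → ℝ} {w : E} {k : ℕ}
    (hf : ∀ j ≤ k, f (x j) = y j) (hle : ∀ j ≤ k, ⟪w, x j⟫ ≤ ⟪w, x k⟫)
    (hlt : ⟪w, x k⟫ < ⟪w, x (k + 1)⟫)
    (hg : ∀ v, g v =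
      f v + (y (k + 1) - f (x (k + 1))) / ⟪w, x (k + 1) - x k⟫ * max ⟪w, v - x k⟫ 0) :
    ∀ j ≤ k + 1, g (x j) = y j := by
  intro j hj
  rcases Nat.le_succ_iff.1 hj with hjk | rfl
  · rw [hg, max_inner_sub_zero_eq_zero (hle j hjk), hf j hjk, mul_zero, add_zero]
  · rw [hg]
    exact add_div_mul_max_self_zero (by rwa [inner_sub_right, sub_pos])

end

theorem shallow_relu_interpolation_general
    (d m : ℕ)
    (x : ℕ → EuclideanSpace ℝ (Fin d)) (y : ℕ → ℝ)
    (w : EuclideanSpace ℝ (Fin d))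
    (hw : ∀ i j : ℕ, i < j → j < m → (inner ℝ w (x i) : ℝ) < inner ℝ w (x j))
    (N : ℕ → EuclideanSpace ℝ (Fin d) → ℝ) (c : ℕ → ℝ)
    (hN0 : ∀ v, N 0 v = y 0)
    (hc : ∀ j : ℕ, 1 ≤ j → j ≤ m - 1 →
      c j = (y j - N (j - 1) (x j)) / (inner ℝ w (x j - x (j - 1)) : ℝ))
    (hNrec : ∀ j : ℕ, 1 ≤ j → j ≤ m - 1 →
      ∀ v, N j v = N (j - 1) v + c j * max (inner ℝ w (v - x (j - 1)) : ℝ) 0) :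
    ∀ j : ℕ, j < m → N (m - 1) (x j) = y j := by
  have hmono : StrictMonoOn (fun i ↦ ⟪w, x i⟫) (Set.Iio m) := fun i _ j hj hij ↦ hw i j hij hj
  have hinterp : ∀ k < m, ∀ j ≤ k, N k (x j) = y j := by
    intro k
    induction k with
    | zero =>
      intro _ j hj
      rw [Nat.le_zero.1 hj]
      exact hN0 _
    | succ k ih =>
      intro hk
      refine interpolates_add_relu (ih (by omega))
        (fun j hj ↦ hmono.monotoneOn (by simp; omega) (by simp; omega) hj)
        (hmono (by simp; omega) hk k.lt_succ_self) fun v ↦ ?_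
      simpa [hc (k + 1) (by omega) (by omega)] using hNrec (k + 1) (by omega) (by omega) v
  intro j hj
  exact hinterp (m - 1) (by omega) j (by omega)

theorem shallow_relu_interpolation
    (d m : ℕ) (hm : 1 ≤ m)
    (x : ℕ → EuclideanSpace ℝ (Fin d)) (y : ℕ → ℝ)
    (w : EuclideanSpace ℝ (Fin d))
    (hw : ∀ i j : ℕ, i < j → j < m → (inner ℝ w (x i) : ℝ) < inner ℝ w (x j))
    (N : ℕ → EuclideanSpace ℝ (Fin d) → ℝ) (c : ℕ → ℝ)
    (hN0 : ∀ v, N 0 v = y 0)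
    (hc : ∀ j : ℕ, 1 ≤ j → j ≤ m - 1 →
      c j = (y j - N (j - 1) (x j)) / (inner ℝ w (x j - x (j - 1)) : ℝ))
    (hNrec : ∀ j : ℕ, 1 ≤ j → j ≤ m - 1 →
      ∀ v, N j v = N (j - 1) v + c j * max (inner ℝ w (v - x (j - 1)) : ℝ) 0) :
    ∀ j : ℕ, j < m → N (m - 1) (x j) = y j :=
  shallow_relu_interpolation_general d m x y w hw N c hN0 hc hNrec
end

section
/- With p̂_d(r) = (1/√π)·(Γ((d+1)/2)/Γ(d/2)) · ∫₀^{α_r} (sin u)^{d-1} du and α_r = arctan(1/r), r > 0, one has the bounds (1/(π d))(sin α_r)^d ≤ p̂_d(r) ≤ √(d/(2π)) · α_r · (sin α_r)^{d-1}, and also p̂_d(r) < 1/2. -/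
/-!
Write `n = d - 1` and `Wₙ = ∫₀^π sinⁿ`. Both sides of `Γ(n/2 + 1) Wₙ = √π Γ((n+1)/2)` get multiplied
by `(n+1)/2` when `n` increases by 2 (on the left by the integration-by-parts recursion
`Wₙ₊₂ = (n+1)/(n+2) Wₙ`), and they agree for `n = 0, 1`; so the prefactor is `1/Wₙ` and
`p̂ = ∫₀^α sinⁿ / Wₙ`. For the lower bound, `sinⁿ ≥ sinⁿ cos`, whose integral is `sin^d α / d`, and
`Wₙ ≤ π`. For the upper bound, `sin ≤ sin α` on `[0, α]`, and the Wallis identity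
`Wₙ Wₙ₊₁ = 2π/(n+1)` together with `Wₙ₊₁ ≤ Wₙ` gives `Wₙ ≥ √(2π/d)`. Finally `α < π/2` and, by the
symmetry `x ↦ π - x`, `∫₀^{π/2} sinⁿ = Wₙ/2`.
-/

open Real intervalIntegral

section SinPow

variable (n : ℕ)

theorem integral_sin_pow_add_two_eq :
    ∫ x in (0:ℝ)..π, sin x ^ (n + 2) = (n + 1) / (n + 2) * ∫ x in (0:ℝ)..π, sin x ^ n := by
  simp [integral_sin_pow]

theorem integral_sin_pow_mul_integral_sin_pow_succ :
    (∫ x in (0:ℝ)..π, sin x ^ n) * (∫ x in (0:ℝ)..π, sin x ^ (n + 1)) = 2 * π / (n + 1) := by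
  induction n with
  | zero => norm_num [mul_comm]
  | succ n ih =>
    rw [integral_sin_pow_add_two_eq, mul_left_comm,
      mul_comm (∫ x in (0:ℝ)..π, sin x ^ (n + 1)), ih]
    push_cast
    field_simp
    ring

theorem Gamma_mul_integral_sin_pow :
    Gamma ((n + 2) / 2) * ∫ x in (0:ℝ)..π, sin x ^ n = √π * Gamma ((n + 1) / 2) := by
  induction n using Nat.twoStepInduction with
  | zero => norm_num [Gamma_one_half_eq, mul_self_sqrt pi_pos.le]
  | one =>
    have h : ((1 : ℕ) + 2) / 2 = (1 / 2 : ℝ) + 1 := by norm_num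
    rw [h, Gamma_add_one (by norm_num), Gamma_one_half_eq]
    norm_num
    ring
  | more n ih _ =>
    have h₂ : ((n + 2 : ℕ) + 2) / 2 = ((n : ℝ) + 2) / 2 + 1 := by push_cast; ring
    have h₁ : ((n + 2 : ℕ) + 1) / 2 = ((n : ℝ) + 1) / 2 + 1 := by push_cast; ring
    rw [h₂, h₁, integral_sin_pow_add_two_eq, Gamma_add_one (by positivity),
      Gamma_add_one (by positivity)]
    field_simp
    linear_combination ih

theorem integral_sin_pow_le_pi : ∫ x in (0:ℝ)..π, sin x ^ n ≤ π := by
  calc ∫ x in (0:ℝ)..π, sin x ^ n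
      ≤ ∫ _ in (0:ℝ)..π, (1 : ℝ) :=
        integral_mono_on pi_pos.le ((continuous_sin.pow n).intervalIntegrable 0 π)
          _root_.intervalIntegrable_const
          fun x hx => pow_le_one₀ (sin_nonneg_of_mem_Icc hx) (sin_le_one x)
    _ = π := by simp

theorem inv_integral_sin_pow_le_sqrt :
    (∫ x in (0:ℝ)..π, sin x ^ n)⁻¹ ≤ √((n + 1) / (2 * π)) := by
  have hpos := integral_sin_pow_pos n
  have hprod : 2 * π / (n + 1) ≤ (∫ x in (0:ℝ)..π, sin x ^ n) ^ 2 := by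
    rw [← integral_sin_pow_mul_integral_sin_pow_succ, sq]
    exact mul_le_mul_of_nonneg_left (integral_sin_pow_succ_le n) hpos.le
  rw [le_sqrt' (by positivity), inv_pow, ← inv_div]
  exact inv_anti₀ (by positivity) hprod

theorem integral_sin_pow_half_pi :
    ∫ x in (0:ℝ)..π / 2, sin x ^ n = (∫ x in (0:ℝ)..π, sin x ^ n) / 2 := by
  have hint (a b : ℝ) : IntervalIntegrable (fun x => sin x ^ n) MeasureTheory.volume a b :=
    (continuous_sin.pow n).intervalIntegrable a b
  have hsplit := integral_add_adjacent_intervals (hint 0 (π / 2)) (hint (π / 2) π)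
  have hreflect := integral_comp_sub_left (fun x => sin x ^ n) π (a := 0) (b := π / 2)
  simp only [sin_pi_sub, sub_zero, sub_half] at hreflect
  linarith

end SinPow

section Cap

variable (n : ℕ) {α : ℝ}

theorem sin_pow_succ_div_le_integral_sin_pow (hα₀ : 0 ≤ α) (hαπ : α ≤ π) :
    sin α ^ (n + 1) / (n + 1) ≤ ∫ x in (0:ℝ)..α, sin x ^ n := by
  have hprim : ∫ x in (0:ℝ)..α, sin x ^ n * cos x = sin α ^ (n + 1) / (n + 1) := by
    simpa using integral_sin_pow_mul_cos_pow_odd (a := 0) (b := α) n 0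
  rw [← hprim]
  refine integral_mono_on hα₀ (Continuous.intervalIntegrable (by fun_prop) _ _)
    ((continuous_sin.pow n).intervalIntegrable 0 α) fun x hx => mul_le_of_le_one_right ?_ (cos_le_one x)
  exact pow_nonneg (sin_nonneg_of_nonneg_of_le_pi hx.1 (hx.2.trans hαπ)) n

theorem integral_sin_pow_le_mul_sin_pow (hα₀ : 0 ≤ α) (hα : α ≤ π / 2) :
    ∫ x in (0:ℝ)..α, sin x ^ n ≤ α * sin α ^ n := by
  have hsin_le : ∀ x ∈ Set.Icc 0 α, sin x ≤ sin α := fun x hx =>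
    sin_le_sin_of_le_of_le_pi_div_two (by linarith [hx.1, pi_pos]) hα hx.2
  calc ∫ x in (0:ℝ)..α, sin x ^ n
      ≤ ∫ _ in (0:ℝ)..α, sin α ^ n :=
        integral_mono_on hα₀ ((continuous_sin.pow n).intervalIntegrable 0 α)
          _root_.intervalIntegrable_const fun x hx =>
            pow_le_pow_left₀ (sin_nonneg_of_nonneg_of_le_pi hx.1 (by linarith [hx.2, pi_pos]))
              (hsin_le x hx) n
    _ = α * sin α ^ n := by simp

theorem integral_sin_pow_lt_half (hα₀ : 0 ≤ α) (hα : α < π / 2) :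
    ∫ x in (0:ℝ)..α, sin x ^ n < (∫ x in (0:ℝ)..π, sin x ^ n) / 2 := by
  have hint (a b : ℝ) : IntervalIntegrable (fun x => sin x ^ n) MeasureTheory.volume a b :=
    (continuous_sin.pow n).intervalIntegrable a b
  have hrest : 0 < ∫ x in α..π / 2, sin x ^ n := by
    refine intervalIntegral_pos_of_pos_on (hint _ _) (fun x hx => ?_) hα
    exact pow_pos (sin_pos_of_pos_of_lt_pi (by linarith [hx.1]) (by linarith [hx.2, pi_pos])) n
  rw [← integral_sin_pow_half_pi, ← integral_add_adjacent_intervals (hint 0 α) (hint α (π / 2))]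
  linarith

end Cap

theorem one_div_sqrt_pi_mul_Gamma_div_Gamma {d : ℕ} (hd : 1 ≤ d) :
    1 / √π * (Gamma ((d + 1) / 2) / Gamma (d / 2)) = 1 / ∫ x in (0:ℝ)..π, sin x ^ (d - 1) := by
  obtain ⟨n, rfl⟩ : ∃ n, d = n + 1 := ⟨d - 1, by omega⟩
  have hW := Gamma_mul_integral_sin_pow n
  have hpos := integral_sin_pow_pos n
  rw [Nat.add_sub_cancel, Nat.cast_succ, add_assoc, one_add_one_eq_two]
  field_simp
  linear_combination hW

theorem born_dead_probability_bounds (d : ℕ) (hd : 1 ≤ d) (r : ℝ) (hr : 0 < r) :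
    letI αr : ℝ := Real.arctan (1 / r)
    letI p : ℝ := (1 / Real.sqrt π) * (Real.Gamma ((d + 1) / 2) / Real.Gamma (d / 2)) *
      ∫ u in (0:ℝ)..αr, (Real.sin u) ^ (d - 1)
    (1 / (π * d)) * (Real.sin αr) ^ d ≤ p ∧
    p ≤ Real.sqrt (d / (2 * π)) * αr * (Real.sin αr) ^ (d - 1) ∧
    p < 1 / 2 := by
  set α := arctan (1 / r)
  have hα₀ : 0 < α := arctan_pos.2 (by positivity)
  have hα : α < π / 2 := arctan_lt_pi_div_two _
  rw [one_div_sqrt_pi_mul_Gamma_div_Gamma hd]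
  obtain ⟨n, rfl⟩ : ∃ n, d = n + 1 := ⟨d - 1, by omega⟩
  rw [Nat.add_sub_cancel]
  push_cast
  set W := ∫ x in (0:ℝ)..π, sin x ^ n
  set A := ∫ x in (0:ℝ)..α, sin x ^ n
  have hW : 0 < W := integral_sin_pow_pos n
  have hs : 0 < sin α := sin_pos_of_pos_of_lt_pi hα₀ (by linarith [pi_pos])
  have hA_low : sin α ^ (n + 1) / (n + 1) ≤ A :=
    sin_pow_succ_div_le_integral_sin_pow n hα₀.le (by linarith [pi_pos])
  have hA : 0 ≤ A := hA_low.trans' (by positivity)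
  refine ⟨?_, ?_, ?_⟩
  · calc 1 / (π * (n + 1)) * sin α ^ (n + 1) = sin α ^ (n + 1) / (n + 1) / π := by field_simp
      _ ≤ A / W := div_le_div₀ hA hA_low hW (integral_sin_pow_le_pi n)
      _ = 1 / W * A := by ring
  · calc 1 / W * A ≤ √((n + 1) / (2 * π)) * (α * sin α ^ n) := by
          rw [one_div]
          gcongr
          exacts [inv_integral_sin_pow_le_sqrt n, integral_sin_pow_le_mul_sin_pow n hα₀.le hα.le]
      _ = _ := by ring
  · have := integral_sin_pow_lt_half n hα₀.le hα
    rw [one_div_mul_eq_div, div_lt_iff₀ hW]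
    linarith
end

section
/- Let (w, b) be uniform on the unit circle S¹ ⊂ ℝ², and let r > 0. Then P(w x + b < 0 for all x ∈ [−r, r]) = arctan(1/r)/π. -/
/-!
The 1-dimensional Hausdorff measure on the plane is invariant under rotations, so its pullback
along the angle parametrisation `θ ↦ (cos θ, sin θ)` of the unit circle is a finite
translation-invariant measure on `ℝ ⧸ 2πℤ`, hence a multiple `c` of Haar measure; `c ≠ 0`
because the circle projects onto `[-1, 1]`. The ratio is therefore the normalised length of
the set of angles with `r |cos θ| + sin θ < 0`, an arc of half-width `arctan (1 / r)`
around `-π / 2`.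
-/

open MeasureTheory Metric Real
open Set Function AddCircle
open scoped NNReal

theorem exists_hausdorffMeasure_image_eq_mul_volume {T : ℝ} [Fact (0 < T)] {E : Type*}
    [EMetricSpace E] [MeasurableSpace E] [BorelSpace E] {d : ℝ} {f : AddCircle T → E}
    (hf : Continuous f) (hinj : Injective f)
    (hrot : ∀ α, ∃ g : E ≃ᵢ E, f ∘ (α + ·) = g ∘ f)
    (hfin : μH[d] (range f) ≠ ⊤) :
    ∃ c : ℝ≥0, ∀ s, μH[d] (f '' s) = c * volume s := by
  have hemb : MeasurableEmbedding f := (hf.isClosedEmbedding hinj).measurableEmbedding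
  have : IsFiniteMeasure ((μH[d]).comap f) :=
    ⟨by rwa [hemb.comap_apply, image_univ, lt_top_iff_ne_top]⟩
  have : ((μH[d]).comap f).IsAddLeftInvariant := by
    refine ⟨fun α => Measure.ext fun s hs => ?_⟩
    obtain ⟨g, hg⟩ := hrot (-α)
    rw [Measure.map_apply (measurable_const_add α) hs, hemb.comap_apply, hemb.comap_apply,
      ← neg_neg α, ← image_add_left, ← image_comp, hg, image_comp, g.hausdorffMeasure_image]
  have hc := Measure.isAddLeftInvariant_eq_smul ((μH[d]).comap f) volume
  exact ⟨_, fun s => by rw [← hemb.comap_apply, hc]; rfl⟩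

instance fact_two_pi_pos : Fact (0 < 2 * π) := ⟨two_pi_pos⟩

noncomputable def toPlane (θ : AddCircle (2 * π)) : EuclideanSpace ℝ (Fin 2) :=
  Complex.orthonormalBasisOneI.repr (toCircle θ)

theorem toPlane_coe (x : ℝ) :
    toPlane x = Complex.orthonormalBasisOneI.repr (circleMap 0 1 x) := by
  simp [toPlane, toCircle_apply_mk, circleMap, Circle.coe_exp]

theorem toPlane_coe_apply_zero (x : ℝ) : toPlane x 0 = cos x := by
  simp [toPlane_coe, circleMap, Complex.exp_ofReal_mul_I_re]

theorem toPlane_coe_apply_one (x : ℝ) : toPlane x 1 = sin x := by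
  simp [toPlane_coe, circleMap, Complex.exp_ofReal_mul_I_im]

theorem continuous_toPlane : Continuous toPlane :=
  Complex.orthonormalBasisOneI.repr.continuous.comp
    (continuous_subtype_val.comp continuous_toCircle)

theorem injective_toPlane : Injective toPlane :=
  Complex.orthonormalBasisOneI.repr.injective.comp
    (Subtype.val_injective.comp (injective_toCircle two_pi_pos.ne'))

theorem range_toPlane : range toPlane = sphere 0 1 := by
  ext v
  constructor
  · rintro ⟨θ, rfl⟩
    simp [toPlane, Circle.norm_coe]
  · intro hv
    obtain ⟨θ, hθ⟩ := (homeomorphCircle two_pi_pos.ne').surjective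
      ⟨Complex.orthonormalBasisOneI.repr.symm v, mem_sphere_zero_iff_norm.2 <| by
        rw [LinearIsometryEquiv.norm_map]; exact mem_sphere_zero_iff_norm.1 hv⟩
    refine ⟨θ, ?_⟩
    rw [homeomorphCircle_apply] at hθ
    rw [toPlane, hθ]
    exact Complex.orthonormalBasisOneI.repr.apply_symm_apply v

theorem toPlane_comp_add (α : AddCircle (2 * π)) :
    toPlane ∘ (α + ·) =
      (Complex.orthonormalBasisOneI.repr.symm.trans
        ((rotation (toCircle α)).trans Complex.orthonormalBasisOneI.repr)).toIsometryEquiv ∘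
        toPlane := by
  funext θ
  simp [toPlane, toCircle_add, rotation_apply]

theorem hausdorffMeasure_sphere_ne_top :
    μH[1] (sphere (0 : EuclideanSpace ℝ (Fin 2)) 1) ≠ ⊤ := by
  rw [← range_toPlane, ← image_univ, ← coe_image_Ico_eq (p := 2 * π) 0, image_image]
  simp only [toPlane_coe]
  refine ne_top_of_le_ne_top ?_ ((Complex.orthonormalBasisOneI.repr.lipschitz.comp
    (lipschitzWith_circleMap 0 1)).hausdorffMeasure_image_le zero_le_one _)
  simp [hausdorffMeasure_real, ENNReal.mul_eq_top]

theorem hausdorffMeasure_sphere_ne_zero :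
    μH[1] (sphere (0 : EuclideanSpace ℝ (Fin 2)) 1) ≠ 0 := by
  have hproj : LipschitzWith 1 fun v : EuclideanSpace ℝ (Fin 2) => v 0 :=
    LipschitzWith.of_edist_le fun v w => PiLp.edist_apply_le v w 0
  have himage : (fun v : EuclideanSpace ℝ (Fin 2) => v 0) '' sphere 0 1 = Icc (-1) 1 := by
    rw [← range_toPlane, ← range_comp, ← QuotientAddGroup.mk_surjective.range_comp,
      ← Real.range_cos]
    exact congrArg range (funext toPlane_coe_apply_zero)
  have hle := hproj.hausdorffMeasure_image_le zero_le_one (sphere 0 1)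
  rw [himage, hausdorffMeasure_real, Real.volume_Icc] at hle
  intro h
  rw [h] at hle
  norm_num at hle

theorem forall_mem_Icc_mul_add_neg_iff {r a b : ℝ} (hr : 0 ≤ r) :
    (∀ x ∈ Icc (-r) r, a * x + b < 0) ↔ r * |a| + b < 0 := by
  constructor
  · intro h
    rcases abs_cases a with ⟨ha, -⟩ | ⟨ha, -⟩
    · simpa [ha, mul_comm] using h r ⟨by linarith, le_rfl⟩
    · simpa [ha, mul_comm] using h (-r) ⟨le_rfl, by linarith⟩
  · intro h x hx
    have : a * x ≤ r * |a| :=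
      calc a * x ≤ |a| * |x| := (le_abs_self _).trans (abs_mul a x).le
        _ ≤ |a| * r := by gcongr; exact abs_le.2 hx
        _ = r * |a| := mul_comm _ _
    linarith

theorem mul_sin_lt_cos_iff {r t : ℝ} (hr : 0 < r) (ht₀ : 0 ≤ t) (htπ : t ≤ π) :
    r * sin t < cos t ↔ t < arctan r⁻¹ := by
  suffices key : t < π / 2 → (r * sin t < cos t ↔ t < arctan r⁻¹) by
    refine ⟨fun h => (key ?_).1 h, fun h => (key (h.trans (arctan_lt_pi_div_two _))).2 h⟩
    by_contra! ht
    exact (cos_nonpos_of_pi_div_two_le_of_le ht (by linarith)).not_gt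
      ((mul_nonneg hr.le (sin_nonneg_of_nonneg_of_le_pi ht₀ htπ)).trans_lt h)
  intro ht
  have hcos : 0 < cos t := cos_pos_of_mem_Ioo ⟨by linarith [pi_pos], ht⟩
  conv_rhs => rw [← arctan_tan (by linarith [pi_pos]) ht]
  rw [arctan_strictMono.lt_iff_lt, tan_eq_sin_div_cos, div_lt_iff₀ hcos, lt_inv_mul_iff₀ hr]

theorem mul_abs_sin_lt_cos_iff {r s : ℝ} (hr : 0 < r) (hs : |s| ≤ π) :
    r * |sin s| < cos s ↔ |s| < arctan r⁻¹ := by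
  rw [abs_sin_eq_sin_abs_of_abs_le_pi hs, ← cos_abs]
  exact mul_sin_lt_cos_iff hr (abs_nonneg s) hs

theorem Ioc_inter_setOf_mul_abs_cos_add_sin_neg {r : ℝ} (hr : 0 < r) :
    Ioc (-(π / 2) - π) (-(π / 2) - π + 2 * π) ∩ {x | r * |cos x| + sin x < 0} =
      Ioo (-(π / 2) - arctan r⁻¹) (-(π / 2) + arctan r⁻¹) := by
  have hα := arctan_lt_pi_div_two r⁻¹
  ext x
  obtain ⟨s, rfl⟩ : ∃ s, x = s - π / 2 := ⟨x + π / 2, by ring⟩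
  simp only [mem_inter_iff, mem_Ioc, mem_ofPred_eq, mem_Ioo, cos_sub_pi_div_two,
    sin_sub_pi_div_two]
  constructor
  · rintro ⟨⟨h₁, h₂⟩, h⟩
    have := (mul_abs_sin_lt_cos_iff hr (abs_le.2 ⟨by linarith, by linarith⟩)).1 (by linarith)
    rw [abs_lt] at this
    constructor <;> linarith
  · rintro ⟨h₁, h₂⟩
    have := (mul_abs_sin_lt_cos_iff hr (abs_le.2 ⟨by linarith, by linarith⟩)).2
      (abs_lt.2 ⟨by linarith, by linarith⟩)
    refine ⟨⟨by linarith, by linarith⟩, by linarith⟩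

theorem hausdorffMeasure_image_toPlane_div_sphere (U : Set (AddCircle (2 * π))) :
    μH[1] (toPlane '' U) / μH[1] (sphere (0 : EuclideanSpace ℝ (Fin 2)) 1) =
      volume U / ENNReal.ofReal (2 * π) := by
  obtain ⟨c, hc⟩ := exists_hausdorffMeasure_image_eq_mul_volume continuous_toPlane
    injective_toPlane (fun α => ⟨_, toPlane_comp_add α⟩)
    (range_toPlane ▸ hausdorffMeasure_sphere_ne_top)
  have hc0 : (c : ENNReal) ≠ 0 := by
    intro h
    apply hausdorffMeasure_sphere_ne_zero
    rw [← range_toPlane, ← image_univ, hc, h, zero_mul]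
  rw [← range_toPlane, ← image_univ, hc, hc, AddCircle.measure_univ,
    ENNReal.mul_div_mul_left _ _ hc0 ENNReal.coe_ne_top]

theorem born_dead_probability_dim_one (r : ℝ) (hr : 0 < r) :
    μH[(1 : ℝ)] {v : EuclideanSpace ℝ (Fin 2) |
        v ∈ sphere (0 : EuclideanSpace ℝ (Fin 2)) 1 ∧
        ∀ x : ℝ, x ∈ Set.Icc (-r) r → v 0 * x + v 1 < 0}
      / μH[(1 : ℝ)] (sphere (0 : EuclideanSpace ℝ (Fin 2)) 1)
    = ENNReal.ofReal (Real.arctan (1 / r) / π) := by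
  set U := toPlane ⁻¹' {v | r * |v 0| + v 1 < 0}
  have hA : {v : EuclideanSpace ℝ (Fin 2) |
      v ∈ sphere 0 1 ∧ ∀ x ∈ Icc (-r) r, v 0 * x + v 1 < 0} = toPlane '' U := by
    rw [image_preimage_eq_inter_range, range_toPlane, inter_comm]
    simp only [forall_mem_Icc_mul_add_neg_iff hr.le]
    rfl
  have hU : MeasurableSet U :=
    (isOpen_lt (by fun_prop) continuous_const).measurableSet.preimage continuous_toPlane.measurable
  have hvol : volume U = ENNReal.ofReal (2 * arctan r⁻¹) := by
    rw [add_projection_respects_measure (T := 2 * π) (-(π / 2) - π) hU, inter_comm]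
    have hpre : QuotientAddGroup.mk ⁻¹' U = {x : ℝ | r * |cos x| + sin x < 0} := by
      ext x; simp [U, toPlane_coe_apply_zero, toPlane_coe_apply_one]
    rw [hpre, Ioc_inter_setOf_mul_abs_cos_add_sin_neg hr, volume_Ioo]
    ring_nf
  rw [hA, hausdorffMeasure_image_toPlane_div_sphere, hvol, ← ENNReal.ofReal_div_of_pos two_pi_pos,
    one_div]
  congr 1
  field_simp
end

section
/- For ω uniform on [−π, π] and fixed θ_max = arctan(r) ∈ (0, π/2) with r > 0: if |ω| ∈ (π/2 + θ_max, π] then cos(ω − θ) ≤ 0 for all θ ∈ [−θ_max, θ_max]; if |ω| < π/2 − θ_max then cos(ω − θ) > 0 for all θ ∈ [−θ_max, θ_max]. Consequently, for (w,b) uniform on S¹ and x ∈ [−r, r], the neuron φ(wx + b) is identically zero on [−r, r] exactly when the angle ω of (w,b) satisfies |ω| ≥ π/2 + θ_max, an event of probability (π/2 − θ_max)/π = arctan(1/r)/π. -/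
/-!
Since `sin ω * x + cos ω = √(1 + x²) cos (ω - arctan x)` and `arctan` maps `[-r, r]` onto
`[-arctan r, arctan r]`, the neuron is dead on `[-r, r]` iff `cos (ω - θ) ≤ 0` on that interval of
angles, i.e. iff `π / 2 + arctan r ≤ |ω|`.

For the probability, `ω ↦ (sin ω, cos ω)` carries arc length to the one-dimensional Hausdorff
measure: it is `1`-Lipschitz, and on arcs of length `δ ≤ 1` the chord is at least `1 - δ² / 24`
times the arc, so a bisection (arcs meet in at most two points) and `δ → 0` give the lower bound.
The dead set is the arc `[π / 2 + arctan r, 3π / 2 - arctan r]`, of length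
`π - 2 arctan r = 2 arctan (1 / r)`.
-/

open MeasureTheory Metric Real
open Set Filter Topology

noncomputable def circlePoint (ω : ℝ) : EuclideanSpace ℝ (Fin 2) := !₂[sin ω, cos ω]

@[simp] lemma circlePoint_zero (ω : ℝ) : circlePoint ω 0 = sin ω := rfl

@[simp] lemma circlePoint_one (ω : ℝ) : circlePoint ω 1 = cos ω := rfl

lemma circlePoint_add_two_pi (ω : ℝ) : circlePoint (ω + 2 * π) = circlePoint ω := by
  simp only [circlePoint, sin_add_two_pi, cos_add_two_pi]

lemma circlePoint_mem_sphere (ω : ℝ) :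
    circlePoint ω ∈ sphere (0 : EuclideanSpace ℝ (Fin 2)) 1 := by
  rw [mem_sphere_zero_iff_norm, ← pow_eq_one_iff_of_nonneg (norm_nonneg _) two_ne_zero,
    EuclideanSpace.real_norm_sq_eq, Fin.sum_univ_two]
  exact sin_sq_add_cos_sq ω

lemma sphere_eq_circlePoint_image :
    sphere (0 : EuclideanSpace ℝ (Fin 2)) 1 = circlePoint '' Icc (-π) π := by
  refine Subset.antisymm (fun v hv => ?_) (image_subset_iff.2 fun ω _ => circlePoint_mem_sphere ω)
  set z : ℂ := ⟨v 1, v 0⟩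
  have hz : ‖z‖ = 1 := by
    rw [mem_sphere_zero_iff_norm, ← pow_eq_one_iff_of_nonneg (norm_nonneg _) two_ne_zero,
      EuclideanSpace.real_norm_sq_eq, Fin.sum_univ_two] at hv
    rw [Complex.norm_def, Complex.normSq_mk, ← sqrt_one]
    congr 1
    linarith
  refine ⟨z.arg, ⟨(Complex.neg_pi_lt_arg z).le, Complex.arg_le_pi z⟩, ?_⟩
  ext i
  fin_cases i
  · simpa [hz] using Complex.norm_mul_sin_arg z
  · simpa [hz] using Complex.norm_mul_cos_arg z

lemma dist_circlePoint (s t : ℝ) :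
    dist (circlePoint s) (circlePoint t) = 2 * |sin ((s - t) / 2)| := by
  have h : dist (circlePoint s) (circlePoint t) ^ 2 = (2 * |sin ((s - t) / 2)|) ^ 2 := by
    rw [EuclideanSpace.dist_sq_eq, Fin.sum_univ_two, mul_pow, sq_abs, sin_sq_eq_half_sub,
      show 2 * ((s - t) / 2) = s - t by ring, cos_sub]
    simp only [circlePoint_zero, circlePoint_one, Real.dist_eq, sq_abs]
    linear_combination sin_sq_add_cos_sq s + sin_sq_add_cos_sq t
  exact (sq_eq_sq₀ dist_nonneg (by positivity)).1 h

lemma lipschitzWith_circlePoint : LipschitzWith 1 circlePoint := by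
  refine LipschitzWith.of_dist_le_mul fun s t => ?_
  rw [dist_circlePoint, Real.dist_eq, NNReal.coe_one, one_mul]
  linarith [abs_sin_le_abs (x := (s - t) / 2), abs_div (s - t) 2, (abs_two : |(2 : ℝ)| = 2)]

lemma continuous_circlePoint : Continuous circlePoint := lipschitzWith_circlePoint.continuous

lemma mul_abs_sub_le_dist_circlePoint {δ s t : ℝ} (hδ : δ ≤ 1) (h : |s - t| ≤ δ) :
    (1 - δ ^ 2 / 24) * |s - t| ≤ dist (circlePoint s) (circlePoint t) := by
  wlog hts : t ≤ s generalizing s t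
  · rw [dist_comm, abs_sub_comm]
    exact this (abs_sub_comm s t ▸ h) (by linarith)
  rw [abs_of_nonneg (sub_nonneg.2 hts)] at h ⊢
  have hsin := sin_ge_sub_cube (x := (s - t) / 2) (by linarith)
  rw [dist_circlePoint,
    abs_of_nonneg (sin_nonneg_of_nonneg_of_le_pi (by linarith) (by linarith [pi_gt_three]))]
  nlinarith [mul_le_mul h h (by linarith) (by linarith)]

lemma hausdorffMeasure_circlePoint_image_Icc_le (a b : ℝ) :
    μH[1] (circlePoint '' Icc a b) ≤ ENNReal.ofReal (b - a) := by
  simpa [hausdorffMeasure_real] using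
    lipschitzWith_circlePoint.hausdorffMeasure_image_le zero_le_one (Icc a b)

lemma ofReal_mul_le_hausdorffMeasure_circlePoint_image_Icc_of_sub_le {δ a b : ℝ}
    (hδ₀ : 0 < δ) (hδ : δ ≤ 1) (h : b - a ≤ δ) :
    ENNReal.ofReal ((1 - δ ^ 2 / 24) * (b - a)) ≤ μH[1] (circlePoint '' Icc a b) := by
  set c := 1 - δ ^ 2 / 24
  have hc : 0 < c := by simp only [c]; nlinarith
  have hanti : AntilipschitzWith (toNNReal c⁻¹) (fun x : Icc a b => circlePoint x) := by
    refine AntilipschitzWith.of_le_mul_dist fun x y => ?_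
    rw [Subtype.dist_eq, Real.dist_eq, coe_toNNReal _ (by positivity), inv_mul_eq_div,
      le_div_iff₀ hc, mul_comm]
    exact mul_abs_sub_le_dist_circlePoint hδ
      (abs_sub_le_iff.2 ⟨by linarith [x.2.2, y.2.1], by linarith [x.2.1, y.2.2]⟩)
  have hvol : μH[1] (univ : Set (Icc a b)) = ENNReal.ofReal (b - a) := by
    rw [← isometry_subtype_coe.hausdorffMeasure_image (Or.inl zero_le_one), image_univ,
      Subtype.range_coe, hausdorffMeasure_real, volume_Icc]
  have hle := hanti.le_hausdorffMeasure_image zero_le_one univ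
  rw [hvol, image_univ, range_comp' circlePoint, Subtype.range_coe, ENNReal.rpow_one] at hle
  calc ENNReal.ofReal (c * (b - a)) = ENNReal.ofReal c * ENNReal.ofReal (b - a) :=
        ENNReal.ofReal_mul hc.le
    _ ≤ ENNReal.ofReal c * (ENNReal.ofReal c⁻¹ * μH[1] (circlePoint '' Icc a b)) := by
        gcongr
        exact hle
    _ = μH[1] (circlePoint '' Icc a b) := by
        rw [← mul_assoc, ← ENNReal.ofReal_mul hc.le, mul_inv_cancel₀ hc.ne',
          ENNReal.ofReal_one, one_mul]

lemma exists_int_mul_two_pi_eq_sub_of_circlePoint_eq {s t : ℝ}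
    (h : circlePoint s = circlePoint t) : ∃ k : ℤ, k * (2 * π) = s - t := by
  have hsin : sin s = sin t := by simpa using congrArg (· 0) h
  have hcos : cos s = cos t := by simpa using congrArg (· 1) h
  rw [← cos_eq_one_iff, cos_sub, hsin, hcos]
  linear_combination cos_sq_add_sin_sq t

lemma eq_zero_or_eq_two_pi_of_int_mul_two_pi_eq {k : ℤ} {d : ℝ} (hk : k * (2 * π) = d)
    (h₀ : 0 ≤ d) (h₁ : d ≤ 2 * π) : d = 0 ∨ d = 2 * π := by
  have hk₀ : (0 : ℝ) ≤ k := by nlinarith [pi_pos]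
  have hk₁ : (k : ℝ) ≤ 1 := by nlinarith [pi_pos]
  obtain rfl | rfl : k = 0 ∨ k = 1 := by
    have : 0 ≤ k := by exact_mod_cast hk₀
    have : k ≤ 1 := by exact_mod_cast hk₁
    omega
  · simp [← hk]
  · simp [← hk]

lemma circlePoint_image_Icc_inter_subset {a m b : ℝ} (h : b - a ≤ 2 * π) :
    circlePoint '' Icc a m ∩ circlePoint '' Icc m b ⊆ {circlePoint m, circlePoint b} := by
  rintro _ ⟨⟨s, hs, rfl⟩, t, ht, hts⟩
  obtain ⟨k, hk⟩ := exists_int_mul_two_pi_eq_sub_of_circlePoint_eq hts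
  rcases eq_zero_or_eq_two_pi_of_int_mul_two_pi_eq hk (by linarith [hs.2, ht.1])
    (by linarith [hs.1, ht.2]) with hd | hd
  · left
    rw [show s = m by linarith [hs.2, ht.1]]
  · right
    rw [← hts, show t = b by linarith [hs.1, ht.2], mem_singleton_iff]

lemma hausdorffMeasure_circlePoint_image_Icc_eq_add {a m b : ℝ} (ham : a ≤ m) (hmb : m ≤ b)
    (h : b - a ≤ 2 * π) :
    μH[1] (circlePoint '' Icc a b) =
      μH[1] (circlePoint '' Icc a m) + μH[1] (circlePoint '' Icc m b) := by
  have := Measure.nullSingletonClass_hausdorff (EuclideanSpace ℝ (Fin 2)) one_pos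
  rw [← Icc_union_Icc_eq_Icc ham hmb, image_union]
  refine measure_union₀
    (isCompact_Icc.image continuous_circlePoint).measurableSet.nullMeasurableSet ?_
  exact measure_mono_null (circlePoint_image_Icc_inter_subset h) ((toFinite _).measure_zero _)

lemma ofReal_mul_le_hausdorffMeasure_circlePoint_image_Icc_of_sub_le_two_pow_mul {δ : ℝ}
    (hδ₀ : 0 < δ) (hδ : δ ≤ 1) (n : ℕ) {a b : ℝ} (hab : a ≤ b) (h : b - a ≤ 2 * π)
    (hn : b - a ≤ 2 ^ n * δ) :
    ENNReal.ofReal ((1 - δ ^ 2 / 24) * (b - a)) ≤ μH[1] (circlePoint '' Icc a b) := by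
  induction n generalizing a b with
  | zero =>
    exact ofReal_mul_le_hausdorffMeasure_circlePoint_image_Icc_of_sub_le hδ₀ hδ
      (by simpa using hn)
  | succ n ih =>
    have hc : 0 ≤ 1 - δ ^ 2 / 24 := by nlinarith
    set m := (a + b) / 2 with hm
    rw [pow_succ] at hn
    rw [hausdorffMeasure_circlePoint_image_Icc_eq_add (m := m) (by linarith) (by linarith) h,
      show (1 - δ ^ 2 / 24) * (b - a) =
        (1 - δ ^ 2 / 24) * (m - a) + (1 - δ ^ 2 / 24) * (b - m) by ring,
      ENNReal.ofReal_add (mul_nonneg hc (by linarith)) (mul_nonneg hc (by linarith))]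
    exact add_le_add (ih (by linarith) (by linarith) (by linarith))
      (ih (by linarith) (by linarith) (by linarith))

theorem hausdorffMeasure_circlePoint_image_Icc {a b : ℝ} (hab : a ≤ b) (h : b - a ≤ 2 * π) :
    μH[1] (circlePoint '' Icc a b) = ENNReal.ofReal (b - a) := by
  refine le_antisymm (hausdorffMeasure_circlePoint_image_Icc_le a b) ?_
  have hlower : ∀ δ ∈ Ioc (0 : ℝ) 1,
      ENNReal.ofReal ((1 - δ ^ 2 / 24) * (b - a)) ≤ μH[1] (circlePoint '' Icc a b) := by
    rintro δ ⟨hδ₀, hδ⟩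
    obtain ⟨n, hn⟩ := pow_unbounded_of_one_lt ((b - a) / δ) one_lt_two
    exact ofReal_mul_le_hausdorffMeasure_circlePoint_image_Icc_of_sub_le_two_pow_mul hδ₀ hδ n
      hab h ((div_lt_iff₀ hδ₀).1 hn).le
  have htendsto : Tendsto (fun δ : ℝ => ENNReal.ofReal ((1 - δ ^ 2 / 24) * (b - a))) (𝓝[>] 0)
      (𝓝 (ENNReal.ofReal (b - a))) := by
    have hcont : Continuous fun δ : ℝ => ENNReal.ofReal ((1 - δ ^ 2 / 24) * (b - a)) :=
      ENNReal.continuous_ofReal.comp (by fun_prop)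
    simpa using (hcont.tendsto 0).mono_left nhdsWithin_le_nhds
  exact le_of_tendsto htendsto (eventually_of_mem (Ioc_mem_nhdsGT one_pos) hlower)

lemma sin_mul_add_cos_eq (ω x : ℝ) :
    sin ω * x + cos ω = √(1 + x ^ 2) * cos (ω - arctan x) := by
  rw [cos_sub, cos_arctan, sin_arctan]
  field_simp
  ring

lemma image_arctan_Icc (r : ℝ) : arctan '' Icc (-r) r = Icc (-arctan r) (arctan r) := by
  refine Subset.antisymm (image_subset_iff.2 fun x hx => ?_) fun θ hθ => ⟨tan θ, ?_, ?_⟩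
  · rw [← arctan_neg]
    exact ⟨arctan_strictMono.monotone hx.1, arctan_strictMono.monotone hx.2⟩
  all_goals have hθ' : θ ∈ Ioo (-(π / 2)) (π / 2) :=
    ⟨by linarith [hθ.1, arctan_lt_pi_div_two r], by linarith [hθ.2, arctan_lt_pi_div_two r]⟩
  · rw [mem_Icc, ← arctan_le_arctan_iff, ← arctan_le_arctan_iff (y := r), arctan_neg,
      arctan_tan hθ'.1 hθ'.2]
    exact hθ
  · exact arctan_tan hθ'.1 hθ'.2

lemma forall_sin_mul_add_cos_nonpos_iff (r ω : ℝ) :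
    (∀ x ∈ Icc (-r) r, sin ω * x + cos ω ≤ 0) ↔
      ∀ θ ∈ Icc (-arctan r) (arctan r), cos (ω - θ) ≤ 0 := by
  rw [← image_arctan_Icc, forall_mem_image]
  refine forall₂_congr fun x _ => ?_
  rw [sin_mul_add_cos_eq]
  simpa using mul_le_mul_iff_of_pos_left (c := 0) (sqrt_pos.2 (by positivity : 0 < 1 + x ^ 2))

lemma cos_sub_pos_of_abs_lt {ω θ α : ℝ} (hθ : |θ| ≤ α) (hω : |ω| < π / 2 - α) :
    0 < cos (ω - θ) := by
  have : |ω - θ| < π / 2 := (abs_sub ω θ).trans_lt (by linarith)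
  exact cos_pos_of_mem_Ioo (abs_lt.1 this)

lemma cos_sub_nonpos_of_le_abs {ω θ α : ℝ} (hω : |ω| ≤ π) (hθ : |θ| ≤ α)
    (h : π / 2 + α ≤ |ω|) : cos (ω - θ) ≤ 0 := by
  rw [← cos_abs]
  apply cos_nonpos_of_pi_div_two_le_of_le
  · linarith [abs_sub_abs_le_abs_sub ω θ]
  · linarith [abs_sub ω θ]

lemma forall_cos_sub_nonpos_iff {ω α : ℝ} (hα : 0 ≤ α) (hω : |ω| ≤ π) :
    (∀ θ ∈ Icc (-α) α, cos (ω - θ) ≤ 0) ↔ π / 2 + α ≤ |ω| := by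
  refine ⟨fun h => ?_, fun h θ hθ => cos_sub_nonpos_of_le_abs hω (abs_le.2 hθ) h⟩
  by_contra! hlt
  -- `θ` is the point of `[-α, α]` closest to `ω`
  set θ := max (-α) (min α ω)
  have hθ : θ ∈ Icc (-α) α := ⟨le_max_left _ _, max_le (by linarith) (min_le_left _ _)⟩
  have : |ω - θ| < π / 2 := by
    rw [abs_lt] at hlt ⊢
    simp only [θ, max_def, min_def]
    split_ifs <;> constructor <;> linarith [pi_pos]
  exact (cos_pos_of_mem_Ioo (abs_lt.1 this)).not_ge (h θ hθ)

lemma forall_max_sin_mul_add_cos_eq_zero_iff {r ω : ℝ} (hr : 0 ≤ r)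
    (hω : ω ∈ Icc (-π) π) :
    (∀ x ∈ Icc (-r) r, max (sin ω * x + cos ω) 0 = 0) ↔ π / 2 + arctan r ≤ |ω| := by
  simp only [max_eq_right_iff]
  rw [forall_sin_mul_add_cos_nonpos_iff,
    forall_cos_sub_nonpos_iff (arctan_nonneg.2 hr) (abs_le.2 hω)]

lemma circlePoint_image_Icc_add_two_pi (a b : ℝ) :
    circlePoint '' Icc (a + 2 * π) (b + 2 * π) = circlePoint '' Icc a b := by
  rw [← image_add_const_Icc, image_image]
  simp only [circlePoint_add_two_pi]

lemma setOf_mem_sphere_and_forall_max_eq_zero {r : ℝ} (hr : 0 ≤ r) :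
    {v : EuclideanSpace ℝ (Fin 2) | v ∈ sphere (0 : EuclideanSpace ℝ (Fin 2)) 1 ∧
        ∀ x ∈ Icc (-r) r, max (v 0 * x + v 1) 0 = 0} =
      circlePoint '' Icc (π / 2 + arctan r) (3 * π / 2 - arctan r) := by
  have hθ₀ := arctan_nonneg.2 hr
  have hθ := arctan_lt_pi_div_two r
  calc _ = circlePoint '' {ω ∈ Icc (-π) π | π / 2 + arctan r ≤ |ω|} := by
        ext v
        constructor
        · rintro ⟨hv, hdead⟩
          rw [sphere_eq_circlePoint_image] at hv
          obtain ⟨ω, hω, rfl⟩ := hv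
          exact ⟨ω, ⟨hω, (forall_max_sin_mul_add_cos_eq_zero_iff hr hω).1 hdead⟩, rfl⟩
        · rintro ⟨ω, ⟨hω, hω'⟩, rfl⟩
          exact ⟨circlePoint_mem_sphere ω,
            (forall_max_sin_mul_add_cos_eq_zero_iff hr hω).2 hω'⟩
    _ = circlePoint '' (Icc (π / 2 + arctan r) π ∪ Icc (-π) (-(π / 2 + arctan r))) := by
        congr 1
        ext ω
        simp only [mem_ofPred_eq, mem_Icc, mem_union, le_abs]
        constructor
        · rintro ⟨⟨h₁, h₂⟩, h | h⟩
          exacts [Or.inl ⟨h, h₂⟩, Or.inr ⟨h₁, by linarith⟩]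
        · rintro (⟨h₁, h₂⟩ | ⟨h₁, h₂⟩)
          exacts [⟨⟨by linarith, h₂⟩, Or.inl h₁⟩,
            ⟨⟨h₁, by linarith⟩, Or.inr (by linarith)⟩]
    _ = circlePoint '' Icc (π / 2 + arctan r) (3 * π / 2 - arctan r) := by
        rw [image_union, ← circlePoint_image_Icc_add_two_pi (-π), ← image_union,
          show -π + 2 * π = π by ring,
          show -(π / 2 + arctan r) + 2 * π = 3 * π / 2 - arctan r by ring,
          Icc_union_Icc_eq_Icc (by linarith) (by linarith)]

theorem angle_characterization_of_dead_neuron (r : ℝ) (hr : 0 < r) :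
    letI θmax : ℝ := Real.arctan r
    (∀ ω : ℝ, ω ∈ Set.Icc (-π) π → π / 2 + θmax < |ω| →
        ∀ θ ∈ Set.Icc (-θmax) θmax, Real.cos (ω - θ) ≤ 0) ∧
    (∀ ω : ℝ, ω ∈ Set.Icc (-π) π → |ω| < π / 2 - θmax →
        ∀ θ ∈ Set.Icc (-θmax) θmax, 0 < Real.cos (ω - θ)) ∧
    (∀ ω : ℝ, ω ∈ Set.Icc (-π) π →
        ((∀ x ∈ Set.Icc (-r) r, max (Real.sin ω * x + Real.cos ω) 0 = 0) ↔
          π / 2 + θmax ≤ |ω|)) ∧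
    μH[(1 : ℝ)] {v : EuclideanSpace ℝ (Fin 2) |
          v ∈ sphere (0 : EuclideanSpace ℝ (Fin 2)) 1 ∧
          ∀ x ∈ Set.Icc (-r) r, max (v 0 * x + v 1) 0 = 0}
        / μH[(1 : ℝ)] (sphere (0 : EuclideanSpace ℝ (Fin 2)) 1)
      = ENNReal.ofReal (Real.arctan (1 / r) / π) := by
  have hθ₀ := arctan_nonneg.2 hr.le
  have hθ := arctan_lt_pi_div_two r
  have hπ := pi_pos
  refine ⟨fun ω hω h θ hθ => cos_sub_nonpos_of_le_abs (abs_le.2 hω) (abs_le.2 hθ) h.le,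
    fun ω _ h θ hθ => cos_sub_pos_of_abs_lt (abs_le.2 hθ) h,
    fun ω hω => forall_max_sin_mul_add_cos_eq_zero_iff hr.le hω, ?_⟩
  rw [setOf_mem_sphere_and_forall_max_eq_zero hr.le, sphere_eq_circlePoint_image,
    hausdorffMeasure_circlePoint_image_Icc (by linarith) (by linarith),
    hausdorffMeasure_circlePoint_image_Icc (by linarith) (by linarith),
    ← ENNReal.ofReal_div_of_pos (by linarith), one_div, arctan_inv_of_pos hr]
  congr 1
  field_simp
  ring
end
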